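/- Let S be a dominating set of P(5k,k) with k ≥ 4, and for 0 ≤ i ≤ k−1 let S_i = S ∩ ({v_{i+jk} : 0 ≤ j ≤ 4} ∪ {u_{i+jk} : 0 ≤ j ≤ 4}). Then |S_i| ≥ 2 for every i; moreover if |S_ℓ| = 2 for some ℓ, then S_ℓ consists of two non-adjacent inner vertices (i.e., S_ℓ ⊆ {u_{ℓ+jk} : 0 ≤ j ≤ 4} and S_ℓ is independent). -/

import Mathlib

/-!
The closed neighbourhood of an inner vertex `u_{i+jk}` of `P(5k,k)` is
`{v_{i+jk}, u_{i+(j-1)k}, u_{i+jk}, u_{i+(j+1)k}}`, so it lies in column `i`. Identifying column `i`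
with the vertex set of the pentagonal prism `P(5,1)` via `j ↦ i + jk` identifies these
neighbourhoods with those of the inner vertices of `P(5,1)`. Hence the column part of a dominating
set dominates the inner pentagon of `P(5,1)`, and a finite check there shows that this takes at least
two vertices, and exactly two only when they are non-adjacent inner vertices.
-/

open SimpleGraph

/-- The generalized Petersen graph P(n,k): outer vertices `Sum.inl i`,
inner vertices `Sum.inr i`, indices in `ZMod n`. -/
def petersen (n k : ℕ) : SimpleGraph (ZMod n ⊕ ZMod n) :=
  SimpleGraph.fromRel (fun a b =>
    match a, b with
    | Sum.inl i, Sum.inl j => j = i + 1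
    | Sum.inl i, Sum.inr j => j = i
    | Sum.inr i, Sum.inr j => j = i + (k : ZMod n)
    | _, _ => False)

/-- S is a dominating set: N[S] = V. -/
def IsDominating {V : Type*} (G : SimpleGraph V) (S : Set V) : Prop :=
  ∀ v, v ∈ S ∨ ∃ u ∈ S, G.Adj u v

/-- The domination number: minimum cardinality of a (finite) dominating set. -/
noncomputable def gamma {V : Type*} (G : SimpleGraph V) : ℕ :=
  sInf {m | ∃ S : Finset V, IsDominating G ↑S ∧ S.card = m}

/-- The `i`-th column of a vertex subset of P(5k,k):
vertices with index congruent to `i` mod `k`. -/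
def slice5 (k : ℕ) (S : Finset (ZMod (5 * k) ⊕ ZMod (5 * k))) (i : ℕ) :
    Set (ZMod (5 * k) ⊕ ZMod (5 * k)) :=
  {x | x ∈ S ∧ ∃ j ≤ 4, x = Sum.inl ((i + j * k : ℕ) : ZMod (5 * k)) ∨
        x = Sum.inr ((i + j * k : ℕ) : ZMod (5 * k))}

section Adjacency

variable {n k : ℕ}

@[simp]
lemma petersen_adj_inl_inl {a b : ZMod n} :
    (petersen n k).Adj (.inl a) (.inl b) ↔ a ≠ b ∧ (b = a + 1 ∨ a = b + 1) := by
  simp [petersen]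

@[simp]
lemma petersen_adj_inl_inr {a b : ZMod n} : (petersen n k).Adj (.inl a) (.inr b) ↔ b = a := by
  simp [petersen]

@[simp]
lemma petersen_adj_inr_inl {a b : ZMod n} : (petersen n k).Adj (.inr a) (.inl b) ↔ a = b := by
  simp [petersen]

@[simp]
lemma petersen_adj_inr_inr {a b : ZMod n} :
    (petersen n k).Adj (.inr a) (.inr b) ↔ a ≠ b ∧ (b = a + k ∨ a = b + k) := by
  simp [petersen]

instance petersen.decidableAdj : DecidableRel (petersen n k).Adj
  | .inl _, .inl _ => decidable_of_iff _ petersen_adj_inl_inl.symm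
  | .inl _, .inr _ => decidable_of_iff _ petersen_adj_inl_inr.symm
  | .inr _, .inl _ => decidable_of_iff _ petersen_adj_inr_inl.symm
  | .inr _, .inr _ => decidable_of_iff _ petersen_adj_inr_inr.symm

end Adjacency

/-- An outer vertex dominates one inner vertex of the pentagonal prism `P(5,1)` and any vertex
at most three, while two adjacent inner vertices dominate only four of the five. -/
lemma petersen_five_one_inner_dominated_by_pair : ∀ a b : ZMod 5 ⊕ ZMod 5,
    (∀ j : ZMod 5, (a = .inr j ∨ (petersen 5 1).Adj a (.inr j)) ∨
      (b = .inr j ∨ (petersen 5 1).Adj b (.inr j))) →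
    a ≠ b ∧ a.isRight ∧ b.isRight ∧ ¬ (petersen 5 1).Adj a b := by
  decide

lemma petersen_five_one_inner_dominated {T : Set (ZMod 5 ⊕ ZMod 5)}
    (hT : ∀ j : ZMod 5, ∃ a ∈ T, a = .inr j ∨ (petersen 5 1).Adj a (.inr j)) :
    2 ≤ T.ncard ∧ (T.ncard = 2 →
      (∀ a ∈ T, a.isRight) ∧ ∀ a ∈ T, ∀ b ∈ T, ¬ (petersen 5 1).Adj a b) := by
  have of_subset_pair (a b) (hab : T ⊆ {a, b}) := petersen_five_one_inner_dominated_by_pair a b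
    fun j ↦ by
      obtain ⟨u, hu, hj⟩ := hT j
      rcases hab hu with rfl | rfl
      exacts [.inl hj, .inr hj]
  constructor
  · by_contra! h
    obtain ⟨a, ha⟩ := (Set.ncard_le_one_iff_subset_singleton).mp (Nat.le_of_lt_succ h)
    exact (of_subset_pair a a (by simpa using ha)).1 rfl
  · intro h2
    obtain ⟨a, b, -, rfl⟩ := Set.ncard_eq_two.mp h2
    obtain ⟨-, ha, hb, hab⟩ := of_subset_pair a b subset_rfl
    refine ⟨by simp [ha, hb], ?_⟩
    rintro x (rfl | rfl) y (rfl | rfl)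
    exacts [(petersen 5 1).irrefl, hab, fun h ↦ hab h.symm, (petersen 5 1).irrefl]

section Column

variable {k : ℕ}

def columnIndex (k i : ℕ) (j : ZMod 5) : ZMod (5 * k) := ((i + j.val * k : ℕ) : ZMod (5 * k))

def columnMap (k i : ℕ) : ZMod 5 ⊕ ZMod 5 → ZMod (5 * k) ⊕ ZMod (5 * k) :=
  Sum.map (columnIndex k i) (columnIndex k i)

lemma columnIndex_add_one (i : ℕ) (j : ZMod 5) :
    columnIndex k i (j + 1) = columnIndex k i j + k := by
  have hmod : ((j + 1).val * k : ℕ) ≡ (j.val + 1) * k [MOD 5 * k] := by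
    simp [Nat.ModEq, ZMod.val_add, ZMod.val_one_eq_one_mod, Nat.mul_mod_mul_right]
  unfold columnIndex
  rw [(ZMod.natCast_eq_natCast_iff _ _ _).mpr (hmod.add_left i)]
  push_cast
  ring

lemma columnIndex_injective (hk : 0 < k) (i : ℕ) : Function.Injective (columnIndex k i) := by
  intro a b h
  have hab := ((ZMod.natCast_eq_natCast_iff _ _ _).mp h).add_left_cancel' i
  exact ZMod.val_injective _
    ((hab.mul_right_cancel' hk.ne').eq_of_lt_of_lt (ZMod.val_lt a) (ZMod.val_lt b))

lemma columnMap_injective (hk : 0 < k) (i : ℕ) : Function.Injective (columnMap k i) :=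
  Sum.map_injective.mpr ⟨columnIndex_injective hk i, columnIndex_injective hk i⟩

lemma columnMap_adj_inr_iff (hk : 0 < k) (i : ℕ) (a : ZMod 5 ⊕ ZMod 5) (j : ZMod 5) :
    (petersen (5 * k) k).Adj (columnMap k i a) (.inr (columnIndex k i j)) ↔
      (petersen 5 1).Adj a (.inr j) := by
  have inj : ∀ {a b}, columnIndex k i a = columnIndex k i b ↔ a = b :=
    (columnIndex_injective hk i).eq_iff
  rcases a with m | m
  · simp [columnMap, inj]
  · simp [columnMap, ← columnIndex_add_one, inj]

lemma exists_columnMap_of_adj_inr {i : ℕ} {j : ZMod 5} {x : ZMod (5 * k) ⊕ ZMod (5 * k)}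
    (h : (petersen (5 * k) k).Adj x (.inr (columnIndex k i j))) : ∃ a, columnMap k i a = x := by
  rcases x with c | c
  · exact ⟨.inl j, by simp_all [columnMap]⟩
  · obtain ⟨-, hc | hc⟩ := petersen_adj_inr_inr.mp h
    · refine ⟨.inr (j - 1), congrArg Sum.inr (add_right_cancel (b := (k : ZMod (5 * k))) ?_)⟩
      rw [← columnIndex_add_one, sub_add_cancel, hc]
    · exact ⟨.inr (j + 1), by simp [columnMap, columnIndex_add_one, hc]⟩

lemma slice5_eq_image (i : ℕ) (S : Finset (ZMod (5 * k) ⊕ ZMod (5 * k))) :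
    slice5 k S i = columnMap k i '' (columnMap k i ⁻¹' S) := by
  have reindex (P : ZMod (5 * k) → Prop) :
      (∃ j ≤ 4, P ((i + j * k : ℕ) : ZMod (5 * k))) ↔ ∃ m : ZMod 5, P (columnIndex k i m) := by
    constructor
    · rintro ⟨j, hj, h⟩
      refine ⟨j, ?_⟩
      rwa [columnIndex, ZMod.val_natCast, Nat.mod_eq_of_lt (by omega)]
    · rintro ⟨m, h⟩
      exact ⟨m.val, Nat.le_of_lt_succ (ZMod.val_lt m), h⟩
  ext x
  simp only [slice5, Set.mem_ofPred_eq, reindex (fun c ↦ x = .inl c ∨ x = .inr c), Set.mem_image,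
    Set.mem_preimage, Sum.exists, columnMap, Sum.map_inl, Sum.map_inr]
  aesop

lemma columnMap_preimage_dominates_inr (hk : 0 < k) {S : Set (ZMod (5 * k) ⊕ ZMod (5 * k))}
    (hS : IsDominating (petersen (5 * k) k) S) (i : ℕ) (j : ZMod 5) :
    ∃ a ∈ columnMap k i ⁻¹' S, a = .inr j ∨ (petersen 5 1).Adj a (.inr j) := by
  rcases hS (.inr (columnIndex k i j)) with h | ⟨u, hu, hadj⟩
  · exact ⟨.inr j, h, .inl rfl⟩
  · obtain ⟨a, rfl⟩ := exists_columnMap_of_adj_inr hadj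
    exact ⟨a, hu, .inr ((columnMap_adj_inr_iff hk i a j).mp hadj)⟩

lemma ncard_slice5 (hk : 0 < k) (i : ℕ) (S : Finset (ZMod (5 * k) ⊕ ZMod (5 * k))) :
    (slice5 k S i).ncard = (columnMap k i ⁻¹' S).ncard := by
  rw [slice5_eq_image, Set.ncard_image_of_injective _ (columnMap_injective hk i)]

end Column

theorem slice5_lower_and_structure_general (k : ℕ)
    (S : Finset (ZMod (5 * k) ⊕ ZMod (5 * k))) (hS : IsDominating (petersen (5 * k) k) ↑S) :
    (∀ i < k, 2 ≤ (slice5 k S i).ncard) ∧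
    ∀ ℓ < k, (slice5 k S ℓ).ncard = 2 →
      (∀ x ∈ slice5 k S ℓ, ∃ j ≤ 4, x = Sum.inr ((ℓ + j * k : ℕ) : ZMod (5 * k))) ∧
      (∀ x ∈ slice5 k S ℓ, ∀ y ∈ slice5 k S ℓ, ¬ (petersen (5 * k) k).Adj x y) := by
  refine ⟨fun i hi ↦ ?_, fun ℓ hℓ h2 ↦ ?_⟩
  · rw [ncard_slice5 (by omega)]
    exact (petersen_five_one_inner_dominated (columnMap_preimage_dominates_inr (by omega) hS i)).1
  have hk : 0 < k := by omega
  rw [ncard_slice5 hk] at h2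
  obtain ⟨inner, indep⟩ :=
    (petersen_five_one_inner_dominated (columnMap_preimage_dominates_inr hk hS ℓ)).2 h2
  rw [slice5_eq_image]
  constructor
  · rintro _ ⟨a, ha, rfl⟩
    obtain ⟨m, rfl⟩ := Sum.isRight_iff.mp (inner a ha)
    exact ⟨m.val, Nat.le_of_lt_succ (ZMod.val_lt m), rfl⟩
  · rintro _ ⟨a, ha, rfl⟩ _ ⟨b, hb, rfl⟩
    obtain ⟨m, rfl⟩ := Sum.isRight_iff.mp (inner b hb)
    exact (columnMap_adj_inr_iff hk ℓ a m).not.mpr (indep a ha _ hb)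

theorem slice5_lower_and_structure (k : ℕ) (hk : 4 ≤ k)
    (S : Finset (ZMod (5 * k) ⊕ ZMod (5 * k))) (hS : IsDominating (petersen (5 * k) k) ↑S) :
    (∀ i < k, 2 ≤ (slice5 k S i).ncard) ∧
    ∀ ℓ < k, (slice5 k S ℓ).ncard = 2 →
      (∀ x ∈ slice5 k S ℓ, ∃ j ≤ 4, x = Sum.inr ((ℓ + j * k : ℕ) : ZMod (5 * k))) ∧
      (∀ x ∈ slice5 k S ℓ, ∀ y ∈ slice5 k S ℓ, ¬ (petersen (5 * k) k).Adj x y) :=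
  slice5_lower_and_structure_general k S hS
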